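/- Let (M,ḡ,ū) be an n-dimensional Riemannian manifold with a positive function ū, and define the spacetime metric g_bold = ±ū²dt² + ḡ on R×M, with arbitrary metric g = ±u²dt² + g' of the same warped product form. Then the Bianchi operator of the background applied to g restricted to a static slice satisfies β_{ḡ_bold} g_bold' = β_{ḡ} g' + ū^{-2}u du - ū^{-1}g'(∇_{ḡ}ū,·), and β_{ḡ_bold}g_bold(∂_t) = 0. -/

import Mathlib

noncomputable section

open scoped BigOperators
open MeasureTheory Filter

/-- Points of the coordinate chart `ℝⁿ`. -/
abbrev Pt (n : ℕ) := Fin n → ℝ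

/-- Partial derivative of a scalar function in the `i`-th coordinate direction. -/
def pd {n : ℕ} (i : Fin n) (f : Pt n → ℝ) (x : Pt n) : ℝ :=
  fderiv ℝ f x (Pi.single i 1)

/-- Inverse metric `g^{ij}` (pointwise matrix inverse). -/
def ginv {n : ℕ} (g : Pt n → Fin n → Fin n → ℝ) (x : Pt n) (i j : Fin n) : ℝ :=
  (Matrix.of (g x))⁻¹ i j

/-- Christoffel symbols `Γ^k_{ij}` of the metric `g`. -/
def chr {n : ℕ} (g : Pt n → Fin n → Fin n → ℝ) (x : Pt n) (k i j : Fin n) : ℝ :=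
  (1/2) * ∑ l, ginv g x k l *
    (pd i (fun y => g y j l) x + pd j (fun y => g y i l) x - pd l (fun y => g y i j) x)

/-- Covariant derivative of a covector field: `X_{i;j}`. -/
def cdCov {n : ℕ} (g : Pt n → Fin n → Fin n → ℝ) (X : Pt n → Fin n → ℝ)
    (x : Pt n) (i j : Fin n) : ℝ :=
  pd j (fun y => X y i) x - ∑ k, chr g x k i j * X x k

/-- Covariant derivative of a vector field: `X^i_{;j}`. -/
def cdVec {n : ℕ} (g : Pt n → Fin n → Fin n → ℝ) (X : Pt n → Fin n → ℝ)
    (x : Pt n) (i j : Fin n) : ℝ :=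
  pd j (fun y => X y i) x + ∑ k, chr g x i k j * X x k

/-- Covariant derivative of a symmetric (0,2)-tensor: `h_{ij;k}`. -/
def cd2 {n : ℕ} (g : Pt n → Fin n → Fin n → ℝ) (h : Pt n → Fin n → Fin n → ℝ)
    (x : Pt n) (i j k : Fin n) : ℝ :=
  pd k (fun y => h y i j) x - ∑ l, chr g x l i k * h x l j - ∑ l, chr g x l j k * h x i l

/-- Second covariant derivative of a covector field: `X_{i;jk}`. -/
def cdCov2 {n : ℕ} (g : Pt n → Fin n → Fin n → ℝ) (X : Pt n → Fin n → ℝ)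
    (x : Pt n) (i j k : Fin n) : ℝ :=
  cd2 g (fun y a b => cdCov g X y a b) x i j k

/-- Riemann curvature tensor `R^l_{ijk}`. -/
def riem {n : ℕ} (g : Pt n → Fin n → Fin n → ℝ) (x : Pt n) (l i j k : Fin n) : ℝ :=
  pd j (fun y => chr g y l i k) x - pd k (fun y => chr g y l i j) x
  + ∑ m, chr g x l m j * chr g x m i k - ∑ m, chr g x l m k * chr g x m i j

/-- Riemann curvature with all indices lowered. -/
def riemLow {n : ℕ} (g : Pt n → Fin n → Fin n → ℝ) (x : Pt n) (a b c d : Fin n) : ℝ :=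
  ∑ l, g x a l * riem g x l b c d

/-- Ricci curvature `R_{ij}`. -/
def ric {n : ℕ} (g : Pt n → Fin n → Fin n → ℝ) (x : Pt n) (i j : Fin n) : ℝ :=
  ∑ l, riem g x l i l j

/-- Lower the index of a vector field using `g`. -/
def lowerV {n : ℕ} (g : Pt n → Fin n → Fin n → ℝ) (X : Pt n → Fin n → ℝ)
    (x : Pt n) (i : Fin n) : ℝ :=
  ∑ j, g x i j * X x j

/-- Lie derivative of the metric `g` along the vector field `X`:
`(L_X g)_{ij} = X_{i;j} + X_{j;i}` (index lowered by `g`). -/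
def lieg {n : ℕ} (g : Pt n → Fin n → Fin n → ℝ) (X : Pt n → Fin n → ℝ)
    (x : Pt n) (i j : Fin n) : ℝ :=
  cdCov g (lowerV g X) x i j + cdCov g (lowerV g X) x j i

/-- Hessian `f_{;ij}`. -/
def hess {n : ℕ} (g : Pt n → Fin n → Fin n → ℝ) (f : Pt n → ℝ)
    (x : Pt n) (i j : Fin n) : ℝ :=
  cdCov g (fun y a => pd a f y) x i j

/-- Laplace–Beltrami operator on functions. -/
def lapf {n : ℕ} (g : Pt n → Fin n → Fin n → ℝ) (f : Pt n → ℝ) (x : Pt n) : ℝ :=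
  ∑ i, ∑ j, ginv g x i j * hess g f x i j

/-- Trace of a (0,2)-tensor with respect to `g`. -/
def trT {n : ℕ} (g : Pt n → Fin n → Fin n → ℝ) (h : Pt n → Fin n → Fin n → ℝ)
    (x : Pt n) : ℝ :=
  ∑ i, ∑ j, ginv g x i j * h x i j

/-- Divergence of a (0,2)-tensor, as a covector. -/
def divT {n : ℕ} (g : Pt n → Fin n → Fin n → ℝ) (h : Pt n → Fin n → Fin n → ℝ)
    (x : Pt n) (i : Fin n) : ℝ :=
  ∑ j, ∑ k, ginv g x j k * cd2 g h x i j k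

/-- Bianchi operator `β_g h = -div_g h + (1/2) d (tr_g h)`. -/
def bianchi {n : ℕ} (g : Pt n → Fin n → Fin n → ℝ) (h : Pt n → Fin n → Fin n → ℝ)
    (x : Pt n) (i : Fin n) : ℝ :=
  -divT g h x i + (1/2) * pd i (fun y => trT g h y) x

/-- Gradient vector field `(∇f)^i`. -/
def gradV {n : ℕ} (g : Pt n → Fin n → Fin n → ℝ) (f : Pt n → ℝ)
    (x : Pt n) (i : Fin n) : ℝ :=
  ∑ j, ginv g x i j * pd j f x

/-- The tensor is symmetric. -/
def symT {n : ℕ} (g : Pt n → Fin n → Fin n → ℝ) : Prop :=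
  ∀ x i j, g x i j = g x j i

/-- `g` is pointwise positive definite. -/
def posdef {n : ℕ} (g : Pt n → Fin n → Fin n → ℝ) : Prop :=
  ∀ (x : Pt n) (v : Fin n → ℝ), v ≠ 0 → 0 < ∑ i, ∑ j, g x i j * v i * v j

/-- Smooth componentwise. -/
def smoothT {n : ℕ} (g : Pt n → Fin n → Fin n → ℝ) : Prop :=
  ∀ i j, ContDiff ℝ (⊤ : ℕ∞) (fun x => g x i j)

/-- The lowered tensor `(T_h)_{ijk} = (1/2)(h_{ij;k} + h_{ik;j} - h_{jk;i})`. -/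
def Tlow {n : ℕ} (g : Pt n → Fin n → Fin n → ℝ) (h : Pt n → Fin n → Fin n → ℝ)
    (x : Pt n) (i j k : Fin n) : ℝ :=
  (1/2) * (cd2 g h x i j k + cd2 g h x i k j - cd2 g h x j k i)

/-- Spatial part of a spacetime point (coordinate 0 is the time `t`). -/
def tl {n : ℕ} (X : Pt (n+1)) : Pt n := fun i => X i.succ

/-- The warped product metric `±u² dt² + g` on `ℝ × ℝⁿ` (in coordinates on
`ℝ^{n+1}`, with `0` the time coordinate). -/
def warped {n : ℕ} (ε : ℝ) (u : Pt n → ℝ) (g : Pt n → Fin n → Fin n → ℝ)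
    (X : Pt (n+1)) (a b : Fin (n+1)) : ℝ :=
  if ha : a = 0 then (if b = 0 then ε * (u (tl X))^2 else 0)
  else if hb : b = 0 then 0 else g (tl X) (a.pred ha) (b.pred hb)

def tlCLM (n : ℕ) : Pt (n+1) →L[ℝ] Pt n :=
  ContinuousLinearMap.pi (fun i => ContinuousLinearMap.proj i.succ)

lemma tl_eq {n : ℕ} (X : Pt (n+1)) : tl X = tlCLM n X := rfl

lemma tl_single_succ {n : ℕ} (i : Fin n) : tl (Pi.single i.succ (1:ℝ)) = Pi.single i 1 := by
  funext j
  simp [tl, Pi.single_apply, Fin.succ_inj]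

lemma tl_single_zero {n : ℕ} : tl (Pi.single (0 : Fin (n+1)) (1:ℝ)) = 0 := by
  funext j
  simp [tl, Pi.single_apply, Fin.succ_ne_zero]

lemma diff_comp_tl_iff {n : ℕ} (F : Pt n → ℝ) (X : Pt (n+1)) :
    DifferentiableAt ℝ (fun Y => F (tl Y)) X ↔ DifferentiableAt ℝ F (tl X) := by
  constructor
  · intro h
    set s : Pt n → Pt (n+1) := fun y => Fin.cons (X 0) y with hs
    have hsX : s (tl X) = X := by
      funext a
      cases a using Fin.cases with
      | zero => simp [s]
      | succ a => simp [s, tl]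
    have hsd : DifferentiableAt ℝ s (tl X) := by
      rw [differentiableAt_pi]
      intro a
      cases a using Fin.cases with
      | zero => simpa [s] using (differentiableAt_const (X 0))
      | succ a =>
        have : (fun y : Pt n => s y a.succ) = fun y => y a := by
          funext y; simp [s]
        rw [this]
        exact (ContinuousLinearMap.proj a : Pt n →L[ℝ] ℝ).differentiableAt
    have hFs : F = (fun Y => F (tl Y)) ∘ s := by
      funext y
      have : tl (s y) = y := by
        funext a; simp [s, tl]
      simp [Function.comp, this]
    rw [hFs]
    exact DifferentiableAt.comp _ (by rwa [hsX]) hsd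
  · intro h
    have := h.comp X ((tlCLM n).differentiableAt)
    exact this

lemma fderiv_comp_tl {n : ℕ} (F : Pt n → ℝ) (X : Pt (n+1))
    (h : DifferentiableAt ℝ F (tl X)) :
    fderiv ℝ (fun Y => F (tl Y)) X = (fderiv ℝ F (tl X)).comp (tlCLM n) := by
  have : (fun Y => F (tl Y)) = F ∘ (tlCLM n) := rfl
  rw [this, fderiv_comp X (by rwa [← tl_eq]) ((tlCLM n).differentiableAt),
    ContinuousLinearMap.fderiv, ← tl_eq]

lemma pd_tl_succ {n : ℕ} (F : Pt n → ℝ) (X : Pt (n+1)) (i : Fin n) :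
    pd i.succ (fun Y => F (tl Y)) X = pd i F (tl X) := by
  by_cases h : DifferentiableAt ℝ F (tl X)
  · unfold pd
    rw [fderiv_comp_tl F X h, ContinuousLinearMap.comp_apply, ← tl_eq, tl_single_succ]
  · unfold pd
    rw [fderiv_zero_of_not_differentiableAt h,
      fderiv_zero_of_not_differentiableAt (by rwa [diff_comp_tl_iff])]
    simp

lemma pd_tl_zero {n : ℕ} (F : Pt n → ℝ) (X : Pt (n+1)) :
    pd 0 (fun Y => F (tl Y)) X = 0 := by
  by_cases h : DifferentiableAt ℝ F (tl X)
  · unfold pd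
    rw [fderiv_comp_tl F X h, ContinuousLinearMap.comp_apply, ← tl_eq, tl_single_zero]
    simp
  · unfold pd
    rw [fderiv_zero_of_not_differentiableAt (by rwa [diff_comp_tl_iff])]
    simp

lemma pd_const {n : ℕ} (i : Fin n) (c : ℝ) (x : Pt n) : pd i (fun _ => c) x = 0 := by
  simp [pd]

lemma pd_add {n : ℕ} (i : Fin n) {f g : Pt n → ℝ} {x : Pt n}
    (hf : DifferentiableAt ℝ f x) (hg : DifferentiableAt ℝ g x) :
    pd i (fun y => f y + g y) x = pd i f x + pd i g x := by
  simp [pd, fderiv_fun_add hf hg]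

lemma pd_mul {n : ℕ} (i : Fin n) {f g : Pt n → ℝ} {x : Pt n}
    (hf : DifferentiableAt ℝ f x) (hg : DifferentiableAt ℝ g x) :
    pd i (fun y => f y * g y) x = f x * pd i g x + pd i f x * g x := by
  simp [pd, fderiv_fun_mul hf hg]; ring

lemma pd_const_mul {n : ℕ} (i : Fin n) (c : ℝ) {g : Pt n → ℝ} {x : Pt n}
    (hg : DifferentiableAt ℝ g x) :
    pd i (fun y => c * g y) x = c * pd i g x := by
  simp [pd, fderiv_const_mul hg]

lemma pd_inv {n : ℕ} (i : Fin n) {f : Pt n → ℝ} {x : Pt n}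
    (hf : DifferentiableAt ℝ f x) (hx : f x ≠ 0) :
    pd i (fun y => (f y)⁻¹) x = -((f x)^2)⁻¹ * pd i f x := by
  have hcomp : (fun y => (f y)⁻¹) = Inv.inv ∘ f := rfl
  rw [pd, hcomp, fderiv_comp x (differentiableAt_inv hx) hf, fderiv_inv' hx]
  simp [pd]
  ring

lemma pd_sq {n : ℕ} (i : Fin n) {f : Pt n → ℝ} {x : Pt n}
    (hf : DifferentiableAt ℝ f x) :
    pd i (fun y => (f y)^2 ) x = 2 * f x * pd i f x := by
  have h2 : (fun y => (f y)^2) = fun y => f y * f y := by funext y; ring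
  rw [h2, pd_mul i hf hf]; ring

section comp
variable {n : ℕ} (ε : ℝ) (u : Pt n → ℝ) (g : Pt n → Fin n → Fin n → ℝ)

lemma warped_f00 : (fun X => warped ε u g X 0 0) = (fun X => ε * (u (tl X))^2) := by
  funext X; simp [warped]

lemma warped_f0s (j : Fin n) : (fun X => warped ε u g X 0 j.succ) = (fun _ => (0:ℝ)) := by
  funext X; simp [warped, Fin.succ_ne_zero]

lemma warped_fs0 (i : Fin n) : (fun X => warped ε u g X i.succ 0) = (fun _ => (0:ℝ)) := by
  funext X; simp [warped, Fin.succ_ne_zero]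

lemma warped_fss (i j : Fin n) :
    (fun X => warped ε u g X i.succ j.succ) = (fun X => g (tl X) i j) := by
  funext X; simp [warped, Fin.succ_ne_zero]

lemma det_ne_zero_of_posdef (hg : posdef g) (x : Pt n) : (Matrix.of (g x)).det ≠ 0 := by
  intro hd
  obtain ⟨v, hv, hmv⟩ := (Matrix.exists_mulVec_eq_zero_iff).2 hd
  have h1 := hg x v hv
  have h2 : ∑ i, ∑ j, g x i j * v i * v j = ∑ i, (Matrix.of (g x)).mulVec v i * v i := by
    refine Finset.sum_congr rfl fun i _ => ?_
    simp [Matrix.mulVec, dotProduct, Finset.sum_mul]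
    exact Finset.sum_congr rfl fun j _ => by ring
  rw [h2, hmv] at h1
  simp at h1

lemma ginv_mul (hg : posdef g) (x : Pt n) :
    Matrix.of (g x) * Matrix.of (ginv g x) = 1 := by
  have : Matrix.of (ginv g x) = (Matrix.of (g x))⁻¹ := rfl
  rw [this]
  exact Matrix.mul_nonsing_inv _ (isUnit_iff_ne_zero.2 (det_ne_zero_of_posdef g hg x))

lemma ginv_mul' (hg : posdef g) (x : Pt n) :
    Matrix.of (ginv g x) * Matrix.of (g x) = 1 := by
  have : Matrix.of (ginv g x) = (Matrix.of (g x))⁻¹ := rfl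
  rw [this]
  exact Matrix.nonsing_inv_mul _ (isUnit_iff_ne_zero.2 (det_ne_zero_of_posdef g hg x))

end comp

def winv {n : ℕ} (ε : ℝ) (u : Pt n → ℝ) (g : Pt n → Fin n → Fin n → ℝ)
    (X : Pt (n+1)) (a b : Fin (n+1)) : ℝ :=
  if ha : a = 0 then (if b = 0 then ε * ((u (tl X))^2)⁻¹ else 0)
  else if hb : b = 0 then 0 else ginv g (tl X) (a.pred ha) (b.pred hb)

section winv
variable {n : ℕ} {ε : ℝ} {u : Pt n → ℝ} {g : Pt n → Fin n → Fin n → ℝ}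
  (hε : ε = 1 ∨ ε = -1) (hg : posdef g) (hu : ∀ x, 0 < u x)

omit hε hg hu in
lemma eps_sq (hε : ε = 1 ∨ ε = -1) : ε * ε = 1 := by rcases hε with h | h <;> simp [h]

include hε hg hu in
lemma warped_mul_winv (X : Pt (n+1)) :
    Matrix.of (warped ε u g X) * Matrix.of (winv ε u g X) = 1 := by
  ext a b
  rw [Matrix.mul_apply, Fin.sum_univ_succ]
  have hu2 : (u (tl X))^2 ≠ 0 := pow_ne_zero _ (ne_of_gt (hu (tl X)))
  cases a using Fin.cases with
  | zero =>
    cases b using Fin.cases with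
    | zero =>
      simp [warped, winv, Matrix.one_apply, Fin.succ_ne_zero]
      field_simp
      rcases hε with h | h <;> rw [h] <;> ring <;> exact mul_inv_cancel₀ (ne_of_gt (hu (tl X)))
    | succ b =>
      simp [warped, winv, Matrix.one_apply, Fin.succ_ne_zero, (Fin.succ_ne_zero b).symm]
  | succ a =>
    cases b using Fin.cases with
    | zero =>
      simp [warped, winv, Matrix.one_apply, Fin.succ_ne_zero]
    | succ b =>
      have h2 := congrFun (congrFun (ginv_mul g hg (tl X)) a) b
      rw [Matrix.mul_apply] at h2
      simp only [warped, winv, Matrix.one_apply, Fin.succ_ne_zero, dif_neg, dite_eq_ite,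
        if_neg, Fin.pred_succ, Matrix.of_apply] at *
      simpa [Fin.succ_ne_zero, Fin.succ_inj, Matrix.one_apply] using h2
end winv

section ginvW
variable {n : ℕ} {ε : ℝ} {u : Pt n → ℝ} {g : Pt n → Fin n → Fin n → ℝ}
  (hε : ε = 1 ∨ ε = -1) (hg : posdef g) (hu : ∀ x, 0 < u x)

include hε hg hu in
lemma ginv_warped_eq (X : Pt (n+1)) :
    ginv (warped ε u g) X = winv ε u g X := by
  have h := Matrix.inv_eq_right_inv (warped_mul_winv hε hg hu (g := g) X)
  funext a b
  exact congrFun (congrFun h a) b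

include hε hg hu in
lemma ginvW_00 (X : Pt (n+1)) :
    ginv (warped ε u g) X 0 0 = ε * ((u (tl X))^2)⁻¹ := by
  rw [ginv_warped_eq hε hg hu]; simp [winv]

include hε hg hu in
lemma ginvW_0s (X : Pt (n+1)) (j : Fin n) :
    ginv (warped ε u g) X 0 j.succ = 0 := by
  rw [ginv_warped_eq hε hg hu]; simp [winv, Fin.succ_ne_zero]

include hε hg hu in
lemma ginvW_s0 (X : Pt (n+1)) (i : Fin n) :
    ginv (warped ε u g) X i.succ 0 = 0 := by
  rw [ginv_warped_eq hε hg hu]; simp [winv, Fin.succ_ne_zero]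

include hε hg hu in
lemma ginvW_ss (X : Pt (n+1)) (i j : Fin n) :
    ginv (warped ε u g) X i.succ j.succ = ginv g (tl X) i j := by
  rw [ginv_warped_eq hε hg hu]; simp [winv, Fin.succ_ne_zero]

end ginvW

section pdW
variable {n : ℕ} {ε : ℝ} {u : Pt n → ℝ} {g : Pt n → Fin n → Fin n → ℝ}
  (husm : ContDiff ℝ (⊤ : ℕ∞) u)

lemma pdW_zero (X : Pt (n+1)) (a b : Fin (n+1)) :
    pd 0 (fun Y => warped ε u g Y a b) X = 0 := by
  cases a using Fin.cases with
  | zero =>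
    cases b using Fin.cases with
    | zero => rw [warped_f00]; exact pd_tl_zero (fun y => ε * (u y)^2) X
    | succ b => rw [warped_f0s]; exact pd_const _ _ _
  | succ a =>
    cases b using Fin.cases with
    | zero => rw [warped_fs0]; exact pd_const _ _ _
    | succ b => rw [warped_fss]; exact pd_tl_zero (fun y => g y a b) X

include husm in
lemma pdW_s00 (X : Pt (n+1)) (k : Fin n) :
    pd k.succ (fun Y => warped ε u g Y 0 0) X
      = ε * (2 * u (tl X) * pd k u (tl X)) := by
  rw [warped_f00, pd_tl_succ (fun y => ε * (u y)^2) X k,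
    pd_const_mul k ε (g := fun y => (u y)^2) (((husm.differentiable (by simp)) (tl X)).pow 2),
    pd_sq k ((husm.differentiable (by simp)) (tl X))]

lemma pdW_s0s (X : Pt (n+1)) (k : Fin n) (j : Fin n) :
    pd k.succ (fun Y => warped ε u g Y 0 j.succ) X = 0 := by
  rw [warped_f0s]; exact pd_const _ _ _

lemma pdW_ss0 (X : Pt (n+1)) (k : Fin n) (i : Fin n) :
    pd k.succ (fun Y => warped ε u g Y i.succ 0) X = 0 := by
  rw [warped_fs0]; exact pd_const _ _ _

lemma pdW_sss (X : Pt (n+1)) (k i j : Fin n) :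
    pd k.succ (fun Y => warped ε u g Y i.succ j.succ) X
      = pd k (fun y => g y i j) (tl X) := by
  rw [warped_fss]; exact pd_tl_succ (fun y => g y i j) X k

end pdW

section chrW
variable {n : ℕ} {ε : ℝ} {u : Pt n → ℝ} {g : Pt n → Fin n → Fin n → ℝ}
  (hε : ε = 1 ∨ ε = -1) (hg : posdef g) (hu : ∀ x, 0 < u x) (husm : ContDiff ℝ (⊤ : ℕ∞) u)

include hε hg hu in
lemma chrW_sss (X : Pt (n+1)) (k i j : Fin n) :
    chr (warped ε u g) X k.succ i.succ j.succ = chr g (tl X) k i j := by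
  unfold chr
  rw [Fin.sum_univ_succ, ginvW_s0 hε hg hu, zero_mul, zero_add]
  congr 1
  refine Finset.sum_congr rfl fun l _ => ?_
  rw [ginvW_ss hε hg hu, pdW_sss, pdW_sss, pdW_sss]

include hε hg hu in
lemma chrW_0ss (X : Pt (n+1)) (i j : Fin n) :
    chr (warped ε u g) X 0 i.succ j.succ = 0 := by
  unfold chr
  rw [Fin.sum_univ_succ]
  have h1 : ∀ l : Fin n, ginv (warped ε u g) X 0 l.succ = 0 := ginvW_0s hε hg hu X
  simp only [h1, zero_mul, Finset.sum_const_zero, add_zero]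
  rw [pdW_ss0, pdW_ss0, pdW_zero]
  ring

include hε hg hu husm in
lemma chrW_00s (X : Pt (n+1)) (j : Fin n) :
    chr (warped ε u g) X 0 0 j.succ = (u (tl X))⁻¹ * pd j u (tl X) := by
  unfold chr
  rw [Fin.sum_univ_succ]
  have h1 : ∀ l : Fin n, ginv (warped ε u g) X 0 l.succ = 0 := ginvW_0s hε hg hu X
  simp only [h1, zero_mul, Finset.sum_const_zero, add_zero]
  rw [ginvW_00 hε hg hu]
  simp only [pdW_zero]
  rw [pdW_s00 husm]
  have hune : u (tl X) ≠ 0 := ne_of_gt (hu (tl X))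
  rcases hε with h | h <;> subst h <;> field_simp <;> ring

include hε hg hu husm in
lemma chrW_0s0 (X : Pt (n+1)) (j : Fin n) :
    chr (warped ε u g) X 0 j.succ 0 = (u (tl X))⁻¹ * pd j u (tl X) := by
  unfold chr
  rw [Fin.sum_univ_succ]
  have h1 : ∀ l : Fin n, ginv (warped ε u g) X 0 l.succ = 0 := ginvW_0s hε hg hu X
  simp only [h1, zero_mul, Finset.sum_const_zero, add_zero]
  rw [ginvW_00 hε hg hu]
  simp only [pdW_zero]
  rw [pdW_s00 husm]
  have hune : u (tl X) ≠ 0 := ne_of_gt (hu (tl X))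
  rcases hε with h | h <;> subst h <;> field_simp <;> ring

include hε hg hu in
lemma chrW_000 (X : Pt (n+1)) :
    chr (warped ε u g) X 0 0 0 = 0 := by
  unfold chr
  rw [Fin.sum_univ_succ]
  have h1 : ∀ l : Fin n, ginv (warped ε u g) X 0 l.succ = 0 := ginvW_0s hε hg hu X
  simp only [h1, zero_mul, Finset.sum_const_zero, add_zero]
  rw [pdW_zero]
  ring

include hε hg hu husm in
lemma chrW_s00 (X : Pt (n+1)) (k : Fin n) :
    chr (warped ε u g) X k.succ 0 0 = -(ε * u (tl X) * gradV g u (tl X) k) := by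
  unfold chr
  rw [Fin.sum_univ_succ, ginvW_s0 hε hg hu, zero_mul, zero_add]
  have h2 : ∀ l : Fin n, ginv (warped ε u g) X k.succ l.succ *
      (pd 0 (fun y => warped ε u g y 0 l.succ) X + pd 0 (fun y => warped ε u g y 0 l.succ) X
        - pd l.succ (fun y => warped ε u g y 0 0) X)
      = ginv g (tl X) k l * (-(ε * (2 * u (tl X) * pd l u (tl X)))) := by
    intro l
    rw [ginvW_ss hε hg hu, pdW_zero, pdW_s00 husm]
    ring
  rw [Finset.sum_congr rfl fun l _ => h2 l]
  unfold gradV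
  have h3 : ∀ l : Fin n, 1/2 * (ginv g (tl X) k l * -(ε * (2 * u (tl X) * pd l u (tl X))))
      = -(ε * u (tl X) * (ginv g (tl X) k l * pd l u (tl X))) := fun l => by ring
  rw [Finset.mul_sum, Finset.sum_congr rfl fun l _ => h3 l,
    Finset.sum_neg_distrib, ← Finset.mul_sum]

end chrW

section chrW2
variable {n : ℕ} {ε : ℝ} {u : Pt n → ℝ} {g : Pt n → Fin n → Fin n → ℝ}
  (hε : ε = 1 ∨ ε = -1) (hg : posdef g) (hu : ∀ x, 0 < u x)

include hε hg hu in
lemma chrW_s0s (X : Pt (n+1)) (k j : Fin n) :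
    chr (warped ε u g) X k.succ 0 j.succ = 0 := by
  unfold chr
  rw [Fin.sum_univ_succ, ginvW_s0 hε hg hu, zero_mul, zero_add]
  have h2 : ∀ l : Fin n, ginv (warped ε u g) X k.succ l.succ *
      (pd 0 (fun y => warped ε u g y j.succ l.succ) X
        + pd j.succ (fun y => warped ε u g y 0 l.succ) X
        - pd l.succ (fun y => warped ε u g y 0 j.succ) X) = 0 := by
    intro l
    rw [pdW_zero, pdW_s0s, pdW_s0s]
    ring
  rw [Finset.sum_congr rfl fun l _ => h2 l]
  simp

include hε hg hu in
lemma chrW_ss0 (X : Pt (n+1)) (k j : Fin n) :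
    chr (warped ε u g) X k.succ j.succ 0 = 0 := by
  unfold chr
  rw [Fin.sum_univ_succ, ginvW_s0 hε hg hu, zero_mul, zero_add]
  have h2 : ∀ l : Fin n, ginv (warped ε u g) X k.succ l.succ *
      (pd j.succ (fun y => warped ε u g y 0 l.succ) X
        + pd 0 (fun y => warped ε u g y j.succ l.succ) X
        - pd l.succ (fun y => warped ε u g y j.succ 0) X) = 0 := by
    intro l
    rw [pdW_zero, pdW_s0s, pdW_ss0]
    ring
  rw [Finset.sum_congr rfl fun l _ => h2 l]
  simp
end chrW2

section vals
variable {n : ℕ} (ε : ℝ) (u : Pt n → ℝ) (g : Pt n → Fin n → Fin n → ℝ)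
lemma warped_v00 (X : Pt (n+1)) : warped ε u g X 0 0 = ε * (u (tl X))^2 :=
  congrFun (warped_f00 ε u g) X
lemma warped_v0s (X : Pt (n+1)) (j : Fin n) : warped ε u g X 0 j.succ = 0 :=
  congrFun (warped_f0s ε u g j) X
lemma warped_vs0 (X : Pt (n+1)) (i : Fin n) : warped ε u g X i.succ 0 = 0 :=
  congrFun (warped_fs0 ε u g i) X
lemma warped_vss (X : Pt (n+1)) (i j : Fin n) : warped ε u g X i.succ j.succ = g (tl X) i j :=
  congrFun (warped_fss ε u g i j) X
end vals

section cd2W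
variable {n : ℕ} {ε : ℝ} {ub u : Pt n → ℝ} {gb g : Pt n → Fin n → Fin n → ℝ}
  (hε : ε = 1 ∨ ε = -1) (hgb : posdef gb) (hub : ∀ x, 0 < ub x) (hubsm : ContDiff ℝ (⊤ : ℕ∞) ub)

include hε hgb hub in
lemma cd2W_sss (X : Pt (n+1)) (i j k : Fin n) :
    cd2 (warped ε ub gb) (warped ε u g) X i.succ j.succ k.succ = cd2 gb g (tl X) i j k := by
  unfold cd2
  rw [pdW_sss]
  congr 1
  · congr 1
    rw [Fin.sum_univ_succ, warped_v0s, mul_zero, zero_add]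
    refine Finset.sum_congr rfl fun l _ => ?_
    rw [chrW_sss hε hgb hub, warped_vss]
  · rw [Fin.sum_univ_succ, warped_vs0, mul_zero, zero_add]
    refine Finset.sum_congr rfl fun l _ => ?_
    rw [chrW_sss hε hgb hub, warped_vss]

include hε hgb hub hubsm in
lemma cd2W_s00 (X : Pt (n+1)) (i : Fin n) :
    cd2 (warped ε ub gb) (warped ε u g) X i.succ 0 0
      = -(ε * ((ub (tl X))⁻¹ * pd i ub (tl X) * (u (tl X))^2))
        + ε * ub (tl X) * ∑ m, gradV gb ub (tl X) m * g (tl X) i m := by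
  unfold cd2
  rw [pdW_zero]
  rw [Fin.sum_univ_succ, Fin.sum_univ_succ]
  rw [chrW_0s0 hε hgb hub hubsm, warped_v00, chrW_000 hε hgb hub]
  have hs1 : ∀ l : Fin n, chr (warped ε ub gb) X l.succ i.succ 0 * warped ε u g X l.succ 0 = 0 :=
    fun l => by rw [warped_vs0, mul_zero]
  have hs2 : ∀ l : Fin n, chr (warped ε ub gb) X l.succ 0 0 * warped ε u g X i.succ l.succ
      = -(ε * ub (tl X) * gradV gb ub (tl X) l) * g (tl X) i l := by
    intro l
    rw [chrW_s00 hε hgb hub hubsm, warped_vss]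
  rw [Finset.sum_congr rfl fun l _ => hs1 l, Finset.sum_congr rfl fun l _ => hs2 l]
  have hs3 : ∀ l : Fin n, -(ε * ub (tl X) * gradV gb ub (tl X) l) * g (tl X) i l
      = -(ε * ub (tl X) * (gradV gb ub (tl X) l * g (tl X) i l)) := fun l => by ring
  rw [Finset.sum_congr rfl fun l _ => hs3 l, Finset.sum_neg_distrib, ← Finset.mul_sum]
  simp only [Finset.sum_const_zero]
  ring

include hε hgb hub in
lemma cd2W_000 (X : Pt (n+1)) :
    cd2 (warped ε ub gb) (warped ε u g) X 0 0 0 = 0 := by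
  unfold cd2
  rw [pdW_zero, Fin.sum_univ_succ, Fin.sum_univ_succ, chrW_000 hε hgb hub]
  have hs1 : ∀ l : Fin n, chr (warped ε ub gb) X l.succ 0 0 * warped ε u g X l.succ 0 = 0 :=
    fun l => by rw [warped_vs0, mul_zero]
  have hs2 : ∀ l : Fin n, chr (warped ε ub gb) X l.succ 0 0 * warped ε u g X 0 l.succ = 0 :=
    fun l => by rw [warped_v0s, mul_zero]
  rw [Finset.sum_congr rfl fun l _ => hs1 l, Finset.sum_congr rfl fun l _ => hs2 l]
  simp

include hε hgb hub in
lemma cd2W_0ss (X : Pt (n+1)) (j k : Fin n) :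
    cd2 (warped ε ub gb) (warped ε u g) X 0 j.succ k.succ = 0 := by
  unfold cd2
  have hp : pd k.succ (fun y => warped ε u g y 0 j.succ) X = 0 := pdW_s0s X k j
  rw [hp, Fin.sum_univ_succ, Fin.sum_univ_succ]
  rw [chrW_0ss hε hgb hub, warped_v0s]
  have hs1 : ∀ l : Fin n, chr (warped ε ub gb) X l.succ 0 k.succ * warped ε u g X l.succ j.succ = 0 :=
    fun l => by rw [chrW_s0s hε hgb hub, zero_mul]
  have hs2 : ∀ l : Fin n, chr (warped ε ub gb) X l.succ j.succ k.succ * warped ε u g X 0 l.succ = 0 :=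
    fun l => by rw [warped_v0s, mul_zero]
  rw [Finset.sum_congr rfl fun l _ => hs1 l, Finset.sum_congr rfl fun l _ => hs2 l]
  simp
end cd2W

section tdW
variable {n : ℕ} {ε : ℝ} {ub u : Pt n → ℝ} {gb g : Pt n → Fin n → Fin n → ℝ}
  (hε : ε = 1 ∨ ε = -1) (hgb : posdef gb) (hub : ∀ x, 0 < ub x) (hubsm : ContDiff ℝ (⊤ : ℕ∞) ub)

include hε hgb hub in
lemma trT_warped (Y : Pt (n+1)) :
    trT (warped ε ub gb) (warped ε u g) Y
      = ((ub (tl Y))^2)⁻¹ * (u (tl Y))^2 + trT gb g (tl Y) := by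
  unfold trT
  rw [Fin.sum_univ_succ, Fin.sum_univ_succ, ginvW_00 hε hgb hub, warped_v00]
  have h1 : ∀ j : Fin n, ginv (warped ε ub gb) Y 0 j.succ * warped ε u g Y 0 j.succ = 0 :=
    fun j => by rw [ginvW_0s hε hgb hub, zero_mul]
  have h2 : ∀ i : Fin n, (∑ j : Fin (n+1), ginv (warped ε ub gb) Y i.succ j * warped ε u g Y i.succ j)
      = ∑ j : Fin n, ginv gb (tl Y) i j * g (tl Y) i j := by
    intro i
    rw [Fin.sum_univ_succ, ginvW_s0 hε hgb hub, zero_mul, zero_add]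
    exact Finset.sum_congr rfl fun j _ => by rw [ginvW_ss hε hgb hub, warped_vss]
  rw [Finset.sum_congr rfl fun j _ => h1 j, Finset.sum_congr rfl fun i _ => h2 i]
  simp only [Finset.sum_const_zero, add_zero]
  have : ε * ((ub (tl Y))^2)⁻¹ * (ε * (u (tl Y))^2) = ((ub (tl Y))^2)⁻¹ * (u (tl Y))^2 := by
    rcases hε with h | h <;> subst h <;> ring
  rw [this]

include hε hgb hub hubsm in
lemma divT_warped_succ (X : Pt (n+1)) (i : Fin n) :
    divT (warped ε ub gb) (warped ε u g) X i.succ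
      = divT gb g (tl X) i
        - ((ub (tl X))^2)⁻¹ * ((ub (tl X))⁻¹ * pd i ub (tl X) * (u (tl X))^2)
        + (ub (tl X))⁻¹ * ∑ m, gradV gb ub (tl X) m * g (tl X) i m := by
  unfold divT
  rw [Fin.sum_univ_succ, Fin.sum_univ_succ, ginvW_00 hε hgb hub,
    cd2W_s00 hε hgb hub hubsm]
  have h1 : ∀ j : Fin n, ginv (warped ε ub gb) X 0 j.succ *
      cd2 (warped ε ub gb) (warped ε u g) X i.succ 0 j.succ = 0 :=
    fun j => by rw [ginvW_0s hε hgb hub, zero_mul]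
  have h2 : ∀ a : Fin n, (∑ b : Fin (n+1), ginv (warped ε ub gb) X a.succ b *
        cd2 (warped ε ub gb) (warped ε u g) X i.succ a.succ b)
      = ∑ b : Fin n, ginv gb (tl X) a b * cd2 gb g (tl X) i a b := by
    intro a
    rw [Fin.sum_univ_succ, ginvW_s0 hε hgb hub, zero_mul, zero_add]
    exact Finset.sum_congr rfl fun b _ => by
      rw [ginvW_ss hε hgb hub, cd2W_sss hε hgb hub]
  rw [Finset.sum_congr rfl fun j _ => h1 j, Finset.sum_congr rfl fun a _ => h2 a]
  simp only [Finset.sum_const_zero, add_zero]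
  have hune : ub (tl X) ≠ 0 := ne_of_gt (hub (tl X))
  rcases hε with h | h <;> subst h <;> field_simp <;> ring

include hε hgb hub in
lemma divT_warped_zero (X : Pt (n+1)) :
    divT (warped ε ub gb) (warped ε u g) X 0 = 0 := by
  unfold divT
  rw [Fin.sum_univ_succ, Fin.sum_univ_succ, cd2W_000 hε hgb hub, mul_zero]
  have h1 : ∀ j : Fin n, ginv (warped ε ub gb) X 0 j.succ *
      cd2 (warped ε ub gb) (warped ε u g) X 0 0 j.succ = 0 :=
    fun j => by rw [ginvW_0s hε hgb hub, zero_mul]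
  have h2 : ∀ a : Fin n, (∑ b : Fin (n+1), ginv (warped ε ub gb) X a.succ b *
        cd2 (warped ε ub gb) (warped ε u g) X 0 a.succ b) = 0 := by
    intro a
    rw [Fin.sum_univ_succ, ginvW_s0 hε hgb hub, zero_mul, zero_add]
    have : ∀ b : Fin n, ginv (warped ε ub gb) X a.succ b.succ *
        cd2 (warped ε ub gb) (warped ε u g) X 0 a.succ b.succ = 0 :=
      fun b => by rw [cd2W_0ss hε hgb hub, mul_zero]
    rw [Finset.sum_congr rfl fun b _ => this b]
    simp
  rw [Finset.sum_congr rfl fun j _ => h1 j, Finset.sum_congr rfl fun a _ => h2 a]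
  simp
end tdW

section diffb
variable {n m : ℕ}

lemma contDiff_det {f : Pt n → Fin m → Fin m → ℝ}
    (hf : ∀ i j, ContDiff ℝ (⊤ : ℕ∞) (fun x => f x i j)) :
    ContDiff ℝ (⊤ : ℕ∞) (fun x => (Matrix.of (f x)).det) := by
  have : (fun x => (Matrix.of (f x)).det)
      = fun x => ∑ σ : Equiv.Perm (Fin m), ((Equiv.Perm.sign σ : ℤ) : ℝ) * ∏ i, f x (σ i) i := by
    funext x
    rw [Matrix.det_apply]
    refine Finset.sum_congr rfl fun σ _ => ?_
    simp [Units.smul_def, zsmul_eq_mul]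
  rw [this]
  exact ContDiff.sum fun σ _ => ContDiff.mul contDiff_const
    (contDiff_prod fun i _ => hf (σ i) i)

lemma contDiff_adjugate {f : Pt n → Fin m → Fin m → ℝ}
    (hf : ∀ i j, ContDiff ℝ (⊤ : ℕ∞) (fun x => f x i j)) (i j : Fin m) :
    ContDiff ℝ (⊤ : ℕ∞) (fun x => (Matrix.of (f x)).adjugate i j) := by
  have key : ∀ x, (Matrix.of (f x)).adjugate i j
      = (Matrix.of (fun a b => if a = j then (Pi.single i 1 : Fin m → ℝ) b else f x a b)).det := by
    intro x
    rw [Matrix.adjugate_apply]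
    congr 1
    ext a b
    simp [Matrix.updateRow_apply]
  simp only [key]
  exact contDiff_det fun a b => by
    by_cases h : a = j <;> simp [h] <;> [exact contDiff_const; exact hf a b]

lemma contDiff_ginv {f : Pt n → Fin n → Fin n → ℝ}
    (hf : ∀ i j, ContDiff ℝ (⊤ : ℕ∞) (fun x => f x i j))
    (hdet : ∀ x, (Matrix.of (f x)).det ≠ 0) (i j : Fin n) :
    ContDiff ℝ (⊤ : ℕ∞) (fun x => ginv f x i j) := by
  have key : ∀ x, ginv f x i j
      = ((Matrix.of (f x)).det)⁻¹ * (Matrix.of (f x)).adjugate i j := by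
    intro x
    rw [ginv, Matrix.inv_def, Matrix.smul_apply, Ring.inverse_eq_inv', smul_eq_mul]
  simp only [key]
  exact ((contDiff_det hf).inv hdet).mul (contDiff_adjugate hf i j)

lemma contDiff_trT {gb g : Pt n → Fin n → Fin n → ℝ}
    (hgb : smoothT gb) (hgbpos : posdef gb) (hg : smoothT g) :
    ContDiff ℝ (⊤ : ℕ∞) (fun x => trT gb g x) := by
  unfold trT
  exact ContDiff.sum fun i _ => ContDiff.sum fun j _ =>
    (contDiff_ginv hgb (fun x => det_ne_zero_of_posdef gb hgbpos x) i j).mul (hg i j)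

end diffb


/-- for the background spacetime metric `ḡ_bold = ±ū² dt² + ḡ` and
an arbitrary warped-product metric `g_bold = ±u² dt² + g` of the same form,
`β_{ḡ_bold} g_bold (∂_t) = 0` and the spatial components satisfy
`β_{ḡ_bold} g_bold = β_ḡ g + ū⁻² u du - ū⁻¹ g(∇_ḡ ū, ·)`. -/
theorem statement16 {n : ℕ} (ε : ℝ) (hε : ε = 1 ∨ ε = -1)
    (gb g : Pt n → Fin n → Fin n → ℝ) (ub u : Pt n → ℝ)
    (hgbsym : symT gb) (hgbpos : posdef gb) (hgbsm : smoothT gb)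
    (hgsym : symT g) (hgsm : smoothT g)
    (hubsm : ContDiff ℝ (⊤ : ℕ∞) ub) (hubpos : ∀ x, 0 < ub x)
    (husm : ContDiff ℝ (⊤ : ℕ∞) u) (hupos : ∀ x, 0 < u x) :
    ∀ X : Pt (n+1),
      bianchi (warped ε ub gb) (warped ε u g) X 0 = 0 ∧
      ∀ i : Fin n,
        bianchi (warped ε ub gb) (warped ε u g) X i.succ
          = bianchi gb g (tl X) i
            + ((ub (tl X))^2)⁻¹ * u (tl X) * pd i u (tl X)
            - (ub (tl X))⁻¹ * ∑ j, g (tl X) i j * gradV gb ub (tl X) j := by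
  intro X
  have htr : (fun Y : Pt (n+1) => trT (warped ε ub gb) (warped ε u g) Y)
      = (fun Y => (fun y => ((ub y)^2)⁻¹ * (u y)^2 + trT gb g y) (tl Y)) :=
    funext (trT_warped hε hgbpos hubpos)
  constructor
  · unfold bianchi
    rw [divT_warped_zero hε hgbpos hubpos, htr,
      pd_tl_zero (fun y => ((ub y)^2)⁻¹ * (u y)^2 + trT gb g y) X]
    ring
  · intro i
    unfold bianchi
    rw [divT_warped_succ hε hgbpos hubpos hubsm, htr,
      pd_tl_succ (fun y => ((ub y)^2)⁻¹ * (u y)^2 + trT gb g y) X i]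
    set y := tl X with hy
    have hud : DifferentiableAt ℝ u y := (husm.differentiable (by simp)) y
    have hubd : DifferentiableAt ℝ ub y := (hubsm.differentiable (by simp)) y
    have hub2d : DifferentiableAt ℝ (fun z => (ub z)^2) y := hubd.pow 2
    have hub2ne : (ub y)^2 ≠ 0 := pow_ne_zero _ (ne_of_gt (hubpos y))
    have hA : DifferentiableAt ℝ (fun z => ((ub z)^2)⁻¹ * (u z)^2) y :=
      (hub2d.inv hub2ne).mul (hud.pow 2)
    have hB : DifferentiableAt ℝ (fun z => trT gb g z) y :=
      ((contDiff_trT hgbsm hgbpos hgsm).differentiable (by simp)) y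
    rw [pd_add i hA hB,
      pd_mul i (f := fun z => ((ub z)^2)⁻¹) (g := fun z => (u z)^2) (hub2d.inv hub2ne) (hud.pow 2),
      pd_sq i hud,
      pd_inv i hub2d hub2ne,
      pd_sq i hubd]
    have hsum : ∑ m, gradV gb ub y m * g y i m = ∑ j, g y i j * gradV gb ub y j :=
      Finset.sum_congr rfl fun m _ => mul_comm _ _
    rw [hsum]
    have hune : ub y ≠ 0 := ne_of_gt (hubpos y)
    field_simp
    ring
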